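/- Let P_s be a sign pattern on n nodes, let A ∈ Q_s(P_s), let λ < 0 be a real number, and let ν ∈ ℝ^n satisfy ν^T A = λ ν^T. Let Z ⊆ V be such that ν_i = 0 for all i ∈ Z. Suppose a configuration with black set C and marking m is reachable from the configuration with black set Z and no marks by finitely many steps of the signing and coloring rule played on the positive looped pattern P_s^+. Then ν_i = 0 for all i ∈ C, and there exists ε ∈ {+1,−1} such that every marked node k with ν_k ≠ 0 satisfies m(k) = sign(ε·ν_k). -/

import Mathlib

/-- An entry of a sign pattern: `+`, `-`, `0`, or `?` (unrestricted). -/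
inductive SignPatEntry : Type
  | pos | neg | zero | unk
deriving DecidableEq

namespace SignPatEntry

/-- Sign inversion: `inv(+) = -`, `inv(-) = +`. -/
def inv : SignPatEntry → SignPatEntry
  | pos => neg
  | neg => pos
  | zero => zero
  | unk => unk

/-- Product of signs (used as `s · P(u,v)`). -/
def mul : SignPatEntry → SignPatEntry → SignPatEntry
  | pos, y => y
  | neg, y => y.inv
  | zero, _ => zero
  | unk, _ => unk

end SignPatEntry

/-- A real number matches a sign-pattern entry. -/
def matchesSign : SignPatEntry → ℝ → Prop
  | .pos, a => 0 < a
  | .neg, a => a < 0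
  | .zero, a => a = 0
  | .unk, _ => True

/-- The qualitative class of a sign pattern: real matrices whose entries have
the prescribed signs. -/
def QClass {n : ℕ} (P : Fin n → Fin n → SignPatEntry)
    (A : Matrix (Fin n) (Fin n) ℝ) : Prop :=
  ∀ i j : Fin n, matchesSign (P i j) (A i j)

/-- A configuration of the signing-and-coloring game: a set of black nodes and a
partial marking of nodes with signs. -/
structure Config (n : ℕ) where
  black : Finset (Fin n)
  mark : Fin n → Option SignPatEntry

/-- The set of white out-neighbors of `v` (out-neighbors of `v` are the `u` with
`P u v ≠ 0`). -/
def Wset {n : ℕ} (P : Fin n → Fin n → SignPatEntry) (c : Config n) (v : Fin n) :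
    Finset (Fin n) :=
  Finset.univ.filter (fun u => u ∉ c.black ∧ P u v ≠ SignPatEntry.zero)

/-- One step of the signing and coloring rule, played on the pattern `P`. -/
inductive Step {n : ℕ} (P : Fin n → Fin n → SignPatEntry) : Config n → Config n → Prop
  /-- (1) a pivot node `v` with a single white out-neighbor `u` forces `u` black. -/
  | force1 (c : Config n) (v u : Fin n)
      (hv : v ∈ c.black ∨ P v v ≠ SignPatEntry.unk)
      (hW : Wset P c v = {u}) :
      Step P c ⟨insert u c.black, c.mark⟩
  /-- (2) if all white out-neighbors of a pivot `v` are marked consistently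
  (all with `m(u) = P(u,v)` or all with `m(u) = -P(u,v)`), they all become black. -/
  | force2 (c : Config n) (v : Fin n)
      (hv : v ∈ c.black ∨ P v v ≠ SignPatEntry.unk)
      (hall : (∀ u ∈ Wset P c v, c.mark u = some (P u v)) ∨
              (∀ u ∈ Wset P c v, c.mark u = some (P u v).inv)) :
      Step P c ⟨c.black ∪ Wset P c v, c.mark⟩
  /-- (3) if exactly one white out-neighbor `w` of a pivot `v` is unmarked, at least one
  is marked, and every marked one satisfies `m(u) = s · P(u,v)`, then `w` gets
  marked with `-s · P(w,v)`. -/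
  | force3 (c : Config n) (v w : Fin n) (s : SignPatEntry)
      (hv : v ∈ c.black ∨ P v v ≠ SignPatEntry.unk)
      (hs : s = SignPatEntry.pos ∨ s = SignPatEntry.neg)
      (hw : w ∈ Wset P c v) (hwnone : c.mark w = none)
      (hmarked : ∀ u ∈ Wset P c v, u ≠ w → c.mark u = some (s.mul (P u v)))
      (hex : ∃ u ∈ Wset P c v, u ≠ w) :
      Step P c ⟨c.black, Function.update c.mark w (some (s.inv.mul (P w v)))⟩
  /-- (4) if no white node is marked, an arbitrary white node may be marked `+`. -/
  | force4 (c : Config n) (u : Fin n)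
      (hnomark : ∀ x : Fin n, x ∉ c.black → c.mark x = none)
      (hu : u ∉ c.black) :
      Step P c ⟨c.black, Function.update c.mark u (some SignPatEntry.pos)⟩

/-- The initial configuration: black set `Z`, no marks. -/
def initConfig {n : ℕ} (Z : Finset (Fin n)) : Config n := ⟨Z, fun _ => none⟩

/-- `Z` is a signed zero forcing set of the pattern `P`. -/
def SignedZFS {n : ℕ} (P : Fin n → Fin n → SignPatEntry) (Z : Finset (Fin n)) : Prop :=
  ∃ c : Config n, Relation.ReflTransGen (Step P) (initConfig Z) c ∧ c.black = Finset.univ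

/-- The negative looped pattern `P⁻`: off-diagonal as `P`; diagonal `-` if
`P i i ∈ {0,-}`, and `?` if `P i i ∈ {+,?}`. -/
def negLooped {n : ℕ} (P : Fin n → Fin n → SignPatEntry) :
    Fin n → Fin n → SignPatEntry := fun i j =>
  if i = j then
    (match P i i with
      | SignPatEntry.zero => SignPatEntry.neg
      | SignPatEntry.neg => SignPatEntry.neg
      | _ => SignPatEntry.unk)
  else P i j

/-- The positive looped pattern `P⁺`: off-diagonal as `P`; diagonal `+` if
`P i i ∈ {0,+}`, and `?` if `P i i ∈ {-,?}`. -/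
def posLooped {n : ℕ} (P : Fin n → Fin n → SignPatEntry) :
    Fin n → Fin n → SignPatEntry := fun i j =>
  if i = j then
    (match P i i with
      | SignPatEntry.zero => SignPatEntry.pos
      | SignPatEntry.pos => SignPatEntry.pos
      | _ => SignPatEntry.unk)
  else P i j

/-- The sign of a real number, as a sign-pattern entry. -/
noncomputable def sgnR (x : ℝ) : SignPatEntry :=
  if 0 < x then SignPatEntry.pos else if x < 0 then SignPatEntry.neg else SignPatEntry.zero

section Aux

lemma matchesSign_inv (s : SignPatEntry) (x : ℝ) :
    matchesSign s.inv x ↔ matchesSign s (-x) := by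
  cases s <;> simp [SignPatEntry.inv, matchesSign, neg_pos, neg_eq_zero]

lemma pos_or_neg_of {σ : SignPatEntry} (h0 : σ ≠ SignPatEntry.zero)
    (h1 : σ ≠ SignPatEntry.unk) : σ = SignPatEntry.pos ∨ σ = SignPatEntry.neg := by
  cases σ <;> simp_all

lemma ne_zero_of_match {σ : SignPatEntry} (hσ : σ = SignPatEntry.pos ∨ σ = SignPatEntry.neg)
    {a : ℝ} (h : matchesSign σ a) : a ≠ 0 := by
  rcases hσ with rfl | rfl
  · exact ne_of_gt h
  · exact ne_of_lt h

lemma sgnR_eq_of {σ : SignPatEntry} (hσ : σ = SignPatEntry.pos ∨ σ = SignPatEntry.neg)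
    {x : ℝ} (h : matchesSign σ x) : σ = sgnR x := by
  rcases hσ with rfl | rfl
  · have hx : 0 < x := h
    simp [sgnR, hx]
  · have hx : x < 0 := h
    simp [sgnR, hx, not_lt.2 hx.le, asymm hx]

lemma matchesSign_sgnR {x : ℝ} (hx : x ≠ 0) :
    matchesSign (sgnR x) x ∧ (sgnR x = SignPatEntry.pos ∨ sgnR x = SignPatEntry.neg) := by
  unfold sgnR
  split_ifs with h1 h2
  · exact ⟨h1, Or.inl rfl⟩
  · exact ⟨h2, Or.inr rfl⟩
  · exact absurd (le_antisymm (not_lt.1 h1) (not_lt.1 h2)) hx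

lemma prod_pos_of {σ : SignPatEntry} (hσ : σ = SignPatEntry.pos ∨ σ = SignPatEntry.neg)
    {a b : ℝ} (ha : matchesSign σ a) (hb : matchesSign σ b) : 0 < a * b := by
  rcases hσ with rfl | rfl
  · exact mul_pos ha hb
  · exact mul_pos_of_neg_of_neg ha hb

lemma inv_of_prod_neg {σ : SignPatEntry} (hσ : σ = SignPatEntry.pos ∨ σ = SignPatEntry.neg)
    {a b : ℝ} (hb : matchesSign σ b) (h : a * b < 0) : matchesSign σ.inv a := by
  rcases hσ with rfl | rfl
  · have hb' : (0:ℝ) < b := hb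
    show a < 0
    nlinarith
  · have hb' : b < (0:ℝ) := hb
    show 0 < a
    nlinarith

lemma inv_pos_or_neg {σ : SignPatEntry}
    (hσ : σ = SignPatEntry.pos ∨ σ = SignPatEntry.neg) :
    σ.inv = SignPatEntry.pos ∨ σ.inv = SignPatEntry.neg := by
  rcases hσ with rfl | rfl <;> simp [SignPatEntry.inv]

lemma posLooped_diag {n : ℕ} (P : Fin n → Fin n → SignPatEntry) (v : Fin n) :
    posLooped P v v = SignPatEntry.pos ∨ posLooped P v v = SignPatEntry.unk := by
  simp only [posLooped, if_pos rfl]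
  cases P v v <;> simp

lemma posLooped_diag_ne_zero {n : ℕ} (P : Fin n → Fin n → SignPatEntry) (v : Fin n) :
    posLooped P v v ≠ SignPatEntry.zero := by
  rcases posLooped_diag P v with h | h <;> simp [h]

lemma posLooped_off {n : ℕ} (P : Fin n → Fin n → SignPatEntry) {i j : Fin n} (h : i ≠ j) :
    posLooped P i j = P i j := by
  simp [posLooped, h]

lemma posLooped_diag_pos {n : ℕ} (P : Fin n → Fin n → SignPatEntry) {v : Fin n}
    (h : posLooped P v v = SignPatEntry.pos) :
    P v v = SignPatEntry.zero ∨ P v v = SignPatEntry.pos := by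
  simp only [posLooped, if_pos rfl] at h
  revert h
  cases P v v <;> simp

lemma mem_Wset {n : ℕ} (P : Fin n → Fin n → SignPatEntry) (c : Config n) (u v : Fin n) :
    u ∈ Wset P c v ↔ u ∉ c.black ∧ P u v ≠ SignPatEntry.zero := by
  simp [Wset]

/-- Key consequence of the eigenvector equation at a pivot node `v`:
there are nonzero coefficients on the white out-neighborhood, matching the
pattern signs, whose `ν`-weighted sum vanishes. -/
lemma keySum {n : ℕ} (P : Fin n → Fin n → SignPatEntry)
    (hP : ∀ i j : Fin n, i ≠ j → P i j ≠ SignPatEntry.unk)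
    (A : Matrix (Fin n) (Fin n) ℝ) (hA : QClass P A)
    (lam : ℝ) (hlam : lam < 0)
    (ν : Fin n → ℝ) (hν : Matrix.vecMul ν A = lam • ν)
    (c : Config n) (hblack : ∀ i ∈ c.black, ν i = 0)
    (v : Fin n) (hv : v ∈ c.black ∨ posLooped P v v ≠ SignPatEntry.unk) :
    ∃ coef : Fin n → ℝ,
      (∀ u ∈ Wset (posLooped P) c v,
        matchesSign (posLooped P u v) (coef u) ∧
        (posLooped P u v = SignPatEntry.pos ∨ posLooped P u v = SignPatEntry.neg)) ∧
      ∑ u ∈ Wset (posLooped P) c v, ν u * coef u = 0 := by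
  have heig : ∑ i, ν i * A i v = lam * ν v := by
    have h := congrFun hν v
    simpa [Matrix.vecMul, dotProduct] using h
  set W := Wset (posLooped P) c v with hWdef
  have hWsum : ∑ u ∈ W, ν u * A u v = lam * ν v := by
    rw [← heig]
    apply Finset.sum_subset (Finset.subset_univ W)
    intro i _ hi
    rw [hWdef, mem_Wset] at hi
    push_neg at hi
    by_cases hib : i ∈ c.black
    · rw [hblack i hib, zero_mul]
    · have h0 : posLooped P i v = SignPatEntry.zero := hi hib
      have hiv : i ≠ v := by
        rintro rfl
        exact posLooped_diag_ne_zero P i h0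
      rw [posLooped_off P hiv] at h0
      have := hA i v
      rw [h0] at this
      rw [this, mul_zero]
  refine ⟨fun u => if u = v then A v v - lam else A u v, ?_, ?_⟩
  · intro u hu
    by_cases huv : u = v
    · subst huv
      have hub : u ∉ c.black := ((mem_Wset _ _ _ _).1 hu).1
      have hPv : posLooped P u u ≠ SignPatEntry.unk := hv.resolve_left hub
      have hpos : posLooped P u u = SignPatEntry.pos := (posLooped_diag P u).resolve_right hPv
      have hAvv : 0 ≤ A u u := by
        rcases posLooped_diag_pos P hpos with h | h
        · have := hA u u; rw [h] at this; exact le_of_eq this.symm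
        · have := hA u u; rw [h] at this; exact le_of_lt this
      refine ⟨?_, Or.inl hpos⟩
      simp only [if_pos rfl, hpos]
      show (0:ℝ) < A u u - lam
      linarith
    · have hoff := posLooped_off P huv
      have hne0 : posLooped P u v ≠ SignPatEntry.zero := ((mem_Wset _ _ _ _).1 hu).2
      have hneu : posLooped P u v ≠ SignPatEntry.unk := by
        rw [hoff]; exact hP u v huv
      simp only [if_neg huv, hoff]
      exact ⟨hA u v, by rw [hoff] at hne0 hneu; exact pos_or_neg_of hne0 hneu⟩
  · by_cases hvW : v ∈ W
    · have h1 : ∑ u ∈ W, ν u * (if u = v then A v v - lam else A u v)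
          = ∑ u ∈ W.erase v, ν u * A u v + ν v * (A v v - lam) := by
        rw [← Finset.sum_erase_add W _ hvW]
        congr 1
        · exact Finset.sum_congr rfl fun u hu => by
            rw [if_neg (Finset.ne_of_mem_erase hu)]
        · rw [if_pos rfl]
      have h2 : ∑ u ∈ W.erase v, ν u * A u v + ν v * A v v = lam * ν v := by
        rw [Finset.sum_erase_add W _ hvW]; exact hWsum
      rw [h1]
      linear_combination h2
    · have hvb : v ∈ c.black := by
        by_contra hvb
        exact hvW ((mem_Wset _ _ _ _).2 ⟨hvb, posLooped_diag_ne_zero P v⟩)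
      have hνv : ν v = 0 := hblack v hvb
      have h1 : ∑ u ∈ W, ν u * (if u = v then A v v - lam else A u v)
          = ∑ u ∈ W, ν u * A u v :=
        Finset.sum_congr rfl fun u hu => by
          rw [if_neg]; rintro rfl; exact hvW hu
      rw [h1, hWsum, hνv, mul_zero]

/-- The invariant is preserved by one step of the game on `P⁺`. -/
lemma step_inv {n : ℕ} (P : Fin n → Fin n → SignPatEntry)
    (hP : ∀ i j : Fin n, i ≠ j → P i j ≠ SignPatEntry.unk)
    (A : Matrix (Fin n) (Fin n) ℝ) (hA : QClass P A)
    (lam : ℝ) (hlam : lam < 0)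
    (ν : Fin n → ℝ) (hν : Matrix.vecMul ν A = lam • ν)
    {c c' : Config n} (hstep : Step (posLooped P) c c')
    (hb : ∀ i ∈ c.black, ν i = 0)
    (hm : ∃ ε : ℝ, (ε = 1 ∨ ε = -1) ∧
      ∀ (k : Fin n) (σ : SignPatEntry), c.mark k = some σ → ν k ≠ 0 →
        σ = sgnR (ε * ν k)) :
    (∀ i ∈ c'.black, ν i = 0) ∧
    ∃ ε : ℝ, (ε = 1 ∨ ε = -1) ∧
      ∀ (k : Fin n) (σ : SignPatEntry), c'.mark k = some σ → ν k ≠ 0 →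
        σ = sgnR (ε * ν k) := by
  cases hstep with
  | force1 v u hv hWeq =>
    obtain ⟨coef, hcoef, hsum⟩ := keySum P hP A hA lam hlam ν hν c hb v hv
    rw [hWeq] at hsum hcoef
    rw [Finset.sum_singleton] at hsum
    have hcu := hcoef u (Finset.mem_singleton_self u)
    have hcne : coef u ≠ 0 := ne_zero_of_match hcu.2 hcu.1
    have hνu : ν u = 0 := (mul_eq_zero.1 hsum).resolve_right hcne
    refine ⟨?_, hm⟩
    intro i hi
    rcases Finset.mem_insert.1 hi with rfl | hi
    · exact hνu
    · exact hb i hi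
  | force2 v hv hall =>
    obtain ⟨coef, hcoef, hsum⟩ := keySum P hP A hA lam hlam ν hν c hb v hv
    obtain ⟨ε, hε, hmk⟩ := hm
    have hεne : ε ≠ 0 := by rcases hε with rfl | rfl <;> norm_num
    have key : ∀ u ∈ Wset (posLooped P) c v, ν u = 0 := by
      rcases hall with hall | hall
      · have hnn : ∀ u ∈ Wset (posLooped P) c v, 0 ≤ ε * (ν u * coef u) := by
          intro u hu
          by_cases h0 : ν u = 0
          · simp [h0]
          have hmku := hmk u _ (hall u hu) h0
          have hεν : ε * ν u ≠ 0 := mul_ne_zero hεne h0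
          have hms : matchesSign (posLooped P u v) (ε * ν u) := by
            rw [hmku]; exact (matchesSign_sgnR hεν).1
          have hp := prod_pos_of (hcoef u hu).2 hms (hcoef u hu).1
          nlinarith
        have hsg : ∑ u ∈ Wset (posLooped P) c v, ε * (ν u * coef u) = 0 := by
          rw [← Finset.mul_sum, hsum, mul_zero]
        intro u hu
        have h0 := (Finset.sum_eq_zero_iff_of_nonneg hnn).1 hsg u hu
        have hcne : coef u ≠ 0 := ne_zero_of_match (hcoef u hu).2 (hcoef u hu).1
        have := (mul_eq_zero.1 h0).resolve_left hεne
        exact (mul_eq_zero.1 this).resolve_right hcne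
      · have hnn : ∀ u ∈ Wset (posLooped P) c v, 0 ≤ -ε * (ν u * coef u) := by
          intro u hu
          by_cases h0 : ν u = 0
          · simp [h0]
          have hmku := hmk u _ (hall u hu) h0
          have hεν : ε * ν u ≠ 0 := mul_ne_zero hεne h0
          have hms : matchesSign ((posLooped P u v).inv) (ε * ν u) := by
            rw [hmku]; exact (matchesSign_sgnR hεν).1
          rw [matchesSign_inv] at hms
          have hp := prod_pos_of (hcoef u hu).2 hms (hcoef u hu).1
          nlinarith
        have hsg : ∑ u ∈ Wset (posLooped P) c v, -ε * (ν u * coef u) = 0 := by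
          rw [← Finset.mul_sum, hsum, mul_zero]
        intro u hu
        have h0 := (Finset.sum_eq_zero_iff_of_nonneg hnn).1 hsg u hu
        have hcne : coef u ≠ 0 := ne_zero_of_match (hcoef u hu).2 (hcoef u hu).1
        have hεne' : -ε ≠ 0 := neg_ne_zero.2 hεne
        have := (mul_eq_zero.1 h0).resolve_left hεne'
        exact (mul_eq_zero.1 this).resolve_right hcne
    refine ⟨?_, ⟨ε, hε, hmk⟩⟩
    intro i hi
    rcases Finset.mem_union.1 hi with hi | hi
    · exact hb i hi
    · exact key i hi
  | force3 v w s hv hs hw hwnone hmarked hex =>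
    obtain ⟨coef, hcoef, hsum⟩ := keySum P hP A hA lam hlam ν hν c hb v hv
    obtain ⟨ε, hε, hmk⟩ := hm
    have hεne : ε ≠ 0 := by rcases hε with rfl | rfl <;> norm_num
    refine ⟨hb, ?_⟩
    by_cases h0 : ν w = 0
    · refine ⟨ε, hε, ?_⟩
      intro k σ hkσ hνk
      by_cases hkw : k = w
      · subst hkw; exact absurd h0 hνk
      · simp only [Function.update_of_ne hkw] at hkσ
        exact hmk k σ hkσ hνk
    · have hcwne : coef w ≠ 0 := ne_zero_of_match (hcoef w hw).2 (hcoef w hw).1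
      have hsum' : ∑ u ∈ (Wset (posLooped P) c v).erase w, ν u * coef u
          + ν w * coef w = 0 := by
        rw [Finset.sum_erase_add _ _ hw]; exact hsum
      rcases hs with rfl | rfl
      · -- s = pos
        have hnn : ∀ u ∈ (Wset (posLooped P) c v).erase w, 0 ≤ ε * (ν u * coef u) := by
          intro u hu
          obtain ⟨hune, huW⟩ := Finset.mem_erase.1 hu
          by_cases hu0 : ν u = 0
          · simp [hu0]
          have hmku := hmk u _ (hmarked u huW hune) hu0
          have hεν : ε * ν u ≠ 0 := mul_ne_zero hεne hu0
          have hms : matchesSign (posLooped P u v) (ε * ν u) := by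
            have : SignPatEntry.pos.mul (posLooped P u v) = posLooped P u v := rfl
            rw [this] at hmku
            rw [hmku]; exact (matchesSign_sgnR hεν).1
          have hp := prod_pos_of (hcoef u huW |>.2) hms (hcoef u huW |>.1)
          nlinarith
        have h1 : 0 ≤ ∑ u ∈ (Wset (posLooped P) c v).erase w, ε * (ν u * coef u) :=
          Finset.sum_nonneg hnn
        rw [← Finset.mul_sum] at h1
        have hh : ε * (∑ u ∈ (Wset (posLooped P) c v).erase w, ν u * coef u)
            + ε * (ν w * coef w) = 0 := by
          rw [← mul_add, hsum', mul_zero]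
        have hlt : ε * (ν w * coef w) < 0 :=
          lt_of_le_of_ne (by linarith) (mul_ne_zero hεne (mul_ne_zero h0 hcwne))
        have hmw : matchesSign ((posLooped P w v).inv) (ε * ν w) := by
          apply inv_of_prod_neg (hcoef w hw).2 (hcoef w hw).1
          nlinarith
        refine ⟨ε, hε, ?_⟩
        intro k σ hkσ hνk
        by_cases hkw : k = w
        · subst hkw
          simp only [Function.update_self] at hkσ
          have hσ : σ = (posLooped P k v).inv := by
            have := Option.some.inj hkσ
            rw [← this]; rfl
          rw [hσ]
          exact sgnR_eq_of (inv_pos_or_neg (hcoef k hw).2) hmw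
        · simp only [Function.update_of_ne hkw] at hkσ
          exact hmk k σ hkσ hνk
      · -- s = neg
        have hnn : ∀ u ∈ (Wset (posLooped P) c v).erase w, 0 ≤ -ε * (ν u * coef u) := by
          intro u hu
          obtain ⟨hune, huW⟩ := Finset.mem_erase.1 hu
          by_cases hu0 : ν u = 0
          · simp [hu0]
          have hmku := hmk u _ (hmarked u huW hune) hu0
          have hεν : ε * ν u ≠ 0 := mul_ne_zero hεne hu0
          have hms : matchesSign ((posLooped P u v).inv) (ε * ν u) := by
            have : SignPatEntry.neg.mul (posLooped P u v) = (posLooped P u v).inv := rfl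
            rw [this] at hmku
            rw [hmku]; exact (matchesSign_sgnR hεν).1
          rw [matchesSign_inv] at hms
          have hp := prod_pos_of (hcoef u huW |>.2) hms (hcoef u huW |>.1)
          nlinarith
        have h1 : 0 ≤ ∑ u ∈ (Wset (posLooped P) c v).erase w, -ε * (ν u * coef u) :=
          Finset.sum_nonneg hnn
        rw [← Finset.mul_sum] at h1
        have hh : -ε * (∑ u ∈ (Wset (posLooped P) c v).erase w, ν u * coef u)
            + -ε * (ν w * coef w) = 0 := by
          rw [← mul_add, hsum', mul_zero]
        have hlt : -ε * (ν w * coef w) < 0 :=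
          lt_of_le_of_ne (by linarith)
            (mul_ne_zero (neg_ne_zero.2 hεne) (mul_ne_zero h0 hcwne))
        have hmw : matchesSign ((posLooped P w v).inv) (-(ε * ν w)) := by
          apply inv_of_prod_neg (hcoef w hw).2 (hcoef w hw).1
          nlinarith
        rw [matchesSign_inv, neg_neg] at hmw
        refine ⟨ε, hε, ?_⟩
        intro k σ hkσ hνk
        by_cases hkw : k = w
        · subst hkw
          simp only [Function.update_self] at hkσ
          have hσ : σ = posLooped P k v := by
            have := Option.some.inj hkσ
            rw [← this]; rfl
          rw [hσ]
          exact sgnR_eq_of (hcoef k hw).2 hmw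
        · simp only [Function.update_of_ne hkw] at hkσ
          exact hmk k σ hkσ hνk
  | force4 u hnomark hu =>
    refine ⟨hb, ?_⟩
    refine ⟨if 0 < ν u then 1 else -1, by split_ifs <;> simp, ?_⟩
    intro k σ hkσ hνk
    by_cases hkw : k = u
    · subst hkw
      simp only [Function.update_self] at hkσ
      have hσ : σ = SignPatEntry.pos := (Option.some.inj hkσ).symm
      rw [hσ]
      apply sgnR_eq_of (Or.inl rfl)
      show (0:ℝ) < (if 0 < ν k then (1:ℝ) else -1) * ν k
      split_ifs with h
      · linarith
      · have hlt : ν k < 0 := lt_of_le_of_ne (not_lt.1 h) hνk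
        nlinarith
    · simp only [Function.update_of_ne hkw] at hkσ
      have hkb : k ∈ c.black := by
        by_contra hkb
        rw [hnomark k hkb] at hkσ
        cases hkσ
      exact absurd (hb k hkb) hνk

end Aux

/-- If `ν` is a left eigenvector of `A ∈ Q_s(P_s)` for `λ < 0` vanishing
on `Z`, and a configuration `(C, m)` is reachable from `(Z, no marks)` by the signing
and coloring rule on the positive looped pattern `P_s⁺`, then `ν` vanishes on `C` and,
for some `ε ∈ {+1, -1}`, every marked node `k` with `ν k ≠ 0` has mark `sign(ε · ν k)`. -/
theorem stmt1 {n : ℕ} (P : Fin n → Fin n → SignPatEntry)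
    (hP : ∀ i j : Fin n, i ≠ j → P i j ≠ SignPatEntry.unk)
    (A : Matrix (Fin n) (Fin n) ℝ) (hA : QClass P A)
    (lam : ℝ) (hlam : lam < 0)
    (ν : Fin n → ℝ) (hν : Matrix.vecMul ν A = lam • ν)
    (Z : Finset (Fin n)) (hZ : ∀ i ∈ Z, ν i = 0)
    (c : Config n)
    (hreach : Relation.ReflTransGen (Step (posLooped P)) (initConfig Z) c) :
    (∀ i ∈ c.black, ν i = 0) ∧
    ∃ ε : ℝ, (ε = 1 ∨ ε = -1) ∧
      ∀ (k : Fin n) (σ : SignPatEntry), c.mark k = some σ → ν k ≠ 0 →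
        σ = sgnR (ε * ν k) := by
  induction hreach with
  | refl =>
    refine ⟨hZ, 1, Or.inl rfl, ?_⟩
    intro k σ hkσ _
    simp [initConfig] at hkσ
  | tail _ hstep ih =>
    exact step_inv P hP A hA lam hlam ν hν hstep ih.1 ih.2
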